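/- arXiv:2603.21899 — 2 statements merged into one kernel-verified Lean document; each statement's English description precedes it below -/
import Mathlib

section
/- Let C ∈ (-1, 0), let b, b̃ : ℕ → ℝ be finitely supported with 1 + Σ_{k∈ℕ} b_k - Σ_{k∈ℕ} b̃_k = 0 and D := 2 + Σ_{k∈ℕ} b_k + (1/C)·Σ_{k∈ℕ} k·(b_k - b̃_k) ≠ 0, and define h(z) = z^2 - z·Σ_{k∈ℕ} b_k·κ_s(z)^k - Σ_{k∈ℕ} b̃_k·κ_s(z)^k with κ_s(z) = (1 - z^2 + √(z^4 + 2(2C^2-1)z^2 + 1))/(2Cz) (principal complex square root). Then h has a simple zero at z = -1, and (z+1)/h(z) tends to -1/D as z → -1 (z ≠ -1); equivalently, the residue at z = -1 of the function g(z) = (2πi)^{-1}/h(z) satisfies 2πi·Res_{-1}[g] = -1/D. -/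
open Real Complex Filter Topology

/-! At `z = -1` the stable root satisfies `κ_s(-1) = 1` (for `C < 0` the principal square root of
`4C²` is `-2C`) and `κ_s'(-1) = -1/C`. Hence `h(-1) = 1 + Σ b_k - Σ b̃_k = 0` and, by the chain
rule, `h'(-1) = -D ≠ 0`. Then `(z + 1)/h(z)` is the inverse of the difference quotient of `h` at
`-1`, which tends to `1/h'(-1) = -1/D`. -/

theorem HasDerivAt.tendsto_sub_div_of_eq_zero {𝕜 : Type*} [NontriviallyNormedField 𝕜]
    {f : 𝕜 → 𝕜} {f' a : 𝕜} (hf : HasDerivAt f f' a) (ha : f a = 0) (hf' : f' ≠ 0) :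
    Tendsto (fun z => (z - a) / f z) (𝓝[≠] a) (𝓝 f'⁻¹) := by
  refine (hf.tendsto_slope.inv₀ hf').congr' (Eventually.of_forall fun z => ?_)
  rw [slope_def_field, ha, sub_zero, inv_div]

lemma four_mul_sq_cpow_one_half_of_neg {C : ℝ} (hC : C < 0) :
    (4 * (C : ℂ) ^ 2) ^ ((1 : ℂ) / 2) = -2 * C := by
  rw [show 4 * (C : ℂ) ^ 2 = (-2 * C) ^ 2 by ring, one_div]
  exact sq_cpow_two_inv (by simp; linarith)

noncomputable def stableRoot (C : ℝ) (z : ℂ) : ℂ :=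
  (1 - z ^ 2 + (z ^ 4 + 2 * (2 * (C : ℂ) ^ 2 - 1) * z ^ 2 + 1) ^ ((1 : ℂ) / 2)) /
    (2 * (C : ℂ) * z)

lemma stableRoot_neg_one {C : ℝ} (hC : C < 0) : stableRoot C (-1) = 1 := by
  have hC' : (C : ℂ) ≠ 0 := by exact_mod_cast hC.ne
  rw [stableRoot, show (-1 : ℂ) ^ 4 + 2 * (2 * (C : ℂ) ^ 2 - 1) * (-1) ^ 2 + 1 = 4 * C ^ 2 by ring,
    four_mul_sq_cpow_one_half_of_neg hC]
  field_simp
  ring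

lemma hasDerivAt_stableRoot_neg_one {C : ℝ} (hC : C < 0) :
    HasDerivAt (stableRoot C) (-(C : ℂ)⁻¹) (-1) := by
  have hC' : (C : ℂ) ≠ 0 := by exact_mod_cast hC.ne
  set r : ℂ → ℂ := fun z => z ^ 4 + 2 * (2 * (C : ℂ) ^ 2 - 1) * z ^ 2 + 1
  have hr : r (-1) = 4 * C ^ 2 := by ring
  have hr' : HasDerivAt r (-8 * C ^ 2) (-1) := by
    refine (((hasDerivAt_pow 4 (-1 : ℂ)).add
      ((hasDerivAt_pow 2 (-1 : ℂ)).const_mul (2 * (2 * (C : ℂ) ^ 2 - 1)))).add_const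
        1).congr_deriv ?_
    norm_num
    ring
  have hr_slit : r (-1) ∈ slitPlane := by
    rw [hr, show 4 * (C : ℂ) ^ 2 = ((4 * C ^ 2 : ℝ) : ℂ) by push_cast; ring, ofReal_mem_slitPlane]
    nlinarith
  have hsqrt : HasDerivAt (fun z => r z ^ ((1 : ℂ) / 2)) (2 * C) (-1) := by
    refine (hr'.cpow_const (c := (1 : ℂ) / 2) hr_slit).congr_deriv ?_
    rw [hr, show (1 : ℂ) / 2 - 1 = -(1 / 2) by ring, cpow_neg, four_mul_sq_cpow_one_half_of_neg hC]
    field_simp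
    ring
  have hnum := ((hasDerivAt_pow 2 (-1 : ℂ)).const_sub 1).add hsqrt
  have hden := (hasDerivAt_id (-1 : ℂ)).const_mul (2 * (C : ℂ))
  refine (hnum.div hden (by simpa using hC')).congr_deriv ?_
  simp only [hr, four_mul_sq_cpow_one_half_of_neg hC, id, Pi.add_apply]
  field_simp
  norm_num

lemma finsupp_sum_mul_one_pow (v : ℕ →₀ ℝ) :
    (v.sum fun k bk => (bk : ℂ) * 1 ^ k) = ((v.sum fun _ bk => bk : ℝ) : ℂ) := by
  simp [Finsupp.sum]

lemma hasDerivAt_finsupp_sum_mul_pow {κ : ℂ → ℂ} {κ' a : ℂ} (v : ℕ →₀ ℝ)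
    (hκ : HasDerivAt κ κ' a) (hκa : κ a = 1) :
    HasDerivAt (fun z => v.sum fun k bk => (bk : ℂ) * κ z ^ k)
      (κ' * ((v.sum fun k bk => (k : ℝ) * bk : ℝ) : ℂ)) a := by
  have hsum := HasDerivAt.fun_sum (u := v.support) fun k _ => (hκ.pow k).const_mul (v k : ℂ)
  refine hsum.congr_deriv ?_
  simp only [Finsupp.sum, hκa, one_pow, mul_one, ofReal_sum, ofReal_mul, ofReal_natCast,
    Finset.mul_sum]
  exact Finset.sum_congr rfl fun k _ => by ring

noncomputable def boundarySymbol (b btil : ℕ →₀ ℝ) (κ : ℂ → ℂ) (z : ℂ) : ℂ :=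
  z ^ 2 - z * (b.sum fun k bk => (bk : ℂ) * κ z ^ k) - (btil.sum fun k bk => (bk : ℂ) * κ z ^ k)

section boundarySymbol

variable {κ : ℂ → ℂ} (b btil : ℕ →₀ ℝ)

lemma boundarySymbol_neg_one (hκ1 : κ (-1) = 1) :
    boundarySymbol b btil κ (-1) =
      1 + ((b.sum fun _ bk => bk : ℝ) : ℂ) - ((btil.sum fun _ bk => bk : ℝ) : ℂ) := by
  rw [boundarySymbol, hκ1, finsupp_sum_mul_one_pow, finsupp_sum_mul_one_pow]
  ring

lemma hasDerivAt_boundarySymbol_neg_one {κ' : ℂ} (hκ : HasDerivAt κ κ' (-1))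
    (hκ1 : κ (-1) = 1) :
    HasDerivAt (boundarySymbol b btil κ)
      (-2 - ((b.sum fun _ bk => bk : ℝ) : ℂ) + κ' * (((b.sum fun k bk => (k : ℝ) * bk : ℝ) : ℂ)
        - ((btil.sum fun k bk => (k : ℝ) * bk : ℝ) : ℂ))) (-1) := by
  have hb := hasDerivAt_finsupp_sum_mul_pow b hκ hκ1
  have hbtil := hasDerivAt_finsupp_sum_mul_pow btil hκ hκ1
  refine (((hasDerivAt_pow 2 (-1 : ℂ)).sub ((hasDerivAt_id (-1 : ℂ)).mul hb)).sub
    hbtil).congr_deriv ?_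
  simp only [id, hκ1, finsupp_sum_mul_one_pow]
  ring

end boundarySymbol

/-- For `C ∈ (-1,0)` and finitely supported `b, b̃ : ℕ → ℝ` with
`1 + Σ b_k - Σ b̃_k = 0` and `D := 2 + Σ b_k + (1/C)·Σ k(b_k - b̃_k) ≠ 0`, the function
`h(z) = z² - z·Σ_k b_k κ_s(z)^k - Σ_k b̃_k κ_s(z)^k` has a simple zero at `z = -1`
(i.e. `h(-1) = 0` and `h'(-1) ≠ 0`), and `(z+1)/h(z) → -1/D` as `z → -1`, `z ≠ -1`;
equivalently `2πi·Res₋₁[g] = -1/D` for `g = (2πi)⁻¹/h`. -/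
theorem unstable_boundary_residue (C : ℝ) (hC : C ∈ Set.Ioo (-1 : ℝ) 0)
    (b btil : ℕ →₀ ℝ)
    (hzero : 1 + (b.sum fun _ bk => bk) - (btil.sum fun _ bk => bk) = 0)
    (hD : 2 + (b.sum fun _ bk => bk)
      + (1 / C) * ((b.sum fun k bk => (k : ℝ) * bk) - (btil.sum fun k bk => (k : ℝ) * bk)) ≠ 0) :
    let D : ℝ := 2 + (b.sum fun _ bk => bk)
      + (1 / C) * ((b.sum fun k bk => (k : ℝ) * bk) - (btil.sum fun k bk => (k : ℝ) * bk))
    let ks : ℂ → ℂ := fun z =>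
      (1 - z ^ 2 + (z ^ 4 + 2 * (2 * (C : ℂ) ^ 2 - 1) * z ^ 2 + 1) ^ ((1 : ℂ) / 2)) /
        (2 * (C : ℂ) * z)
    let h : ℂ → ℂ := fun z =>
      z ^ 2 - z * (b.sum fun k bk => (bk : ℂ) * ks z ^ k)
        - (btil.sum fun k bk => (bk : ℂ) * ks z ^ k)
    h (-1) = 0 ∧ deriv h (-1) ≠ 0 ∧
    Tendsto (fun z : ℂ => (z + 1) / h z) (𝓝[≠] (-1 : ℂ)) (𝓝 (-1 / (D : ℂ))) := by
  intro D ks h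
  have hks1 : stableRoot C (-1) = 1 := stableRoot_neg_one hC.2
  have hh : h = boundarySymbol b btil (stableRoot C) := rfl
  have hh0 : h (-1) = 0 := by
    rw [hh, boundarySymbol_neg_one b btil hks1]
    exact_mod_cast hzero
  have hderiv : HasDerivAt h (-D) (-1) := by
    convert hasDerivAt_boundarySymbol_neg_one b btil (hasDerivAt_stableRoot_neg_one hC.2) hks1
      using 1
    simp only [D]
    push_cast
    ring
  have hDne : -(D : ℂ) ≠ 0 := neg_ne_zero.mpr (by exact_mod_cast hD)
  refine ⟨hh0, hderiv.deriv ▸ hDne, ?_⟩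
  simpa [neg_div, sub_neg_eq_add] using hderiv.tendsto_sub_div_of_eq_zero hh0 hDne
end

section
/- Let C be a real number with 0 < |C| < 1, let ν ∈ ℝ with 0 ≤ |ν| ≤ |C| and |ν| < 1, and define f_±(ξ) = ν·ξ ± arcsin(C·sin ξ) for ξ ∈ [-π, π]. Then the set of critical points of f_+ in [-π, π] is exactly {arccos(-(ν/C)·√((1-C^2)/(1-ν^2))), -arccos(-(ν/C)·√((1-C^2)/(1-ν^2)))}, the set of critical points of f_- is exactly {arccos((ν/C)·√((1-C^2)/(1-ν^2))), -arccos((ν/C)·√((1-C^2)/(1-ν^2)))}, and at every such critical point ξ_SP the second derivative satisfies |f_±''(ξ_SP)| = (1-C^2)^{-1/2}·(1-ν^2)·√(C^2-ν^2); in particular the critical points are non-degenerate if |ν| < |C| and degenerate if |ν| = |C|. -/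
/-!
Writing `s(ξ) = √(1 - C² sin² ξ)`, the phase `νξ + arcsin (C sin ξ)` has derivative
`ν + C cos ξ / s(ξ)` and second derivative `-C (1 - C²) sin ξ / s(ξ)³`. At a critical point
`C cos ξ = -ν s(ξ)`; squaring and using `sin² + cos² = 1` gives `s(ξ)² (1 - ν²) = 1 - C²`, which
pins down `cos ξ = -(ν/C) √((1 - C²)/(1 - ν²))`, a number in `[-1, 1]` exactly because `ν² ≤ C²`,
and also `C² sin² ξ = (C² - ν²)/(1 - ν²)`, from which the curvature follows. The phase `f₋` is
the phase `f₊` with `C` replaced by `-C`, since arcsin is odd.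
-/

open Real Set

noncomputable def greenPhase (C ν ξ : ℝ) : ℝ := ν * ξ + arcsin (C * sin ξ)

noncomputable def saddleCos (C ν : ℝ) : ℝ := -(ν / C) * √((1 - C ^ 2) / (1 - ν ^ 2))

theorem greenPhase_neg_left (C ν : ℝ) :
    greenPhase (-C) ν = fun ξ => ν * ξ - arcsin (C * sin ξ) := by
  funext ξ
  rw [greenPhase, neg_mul, arcsin_neg, sub_eq_add_neg]

theorem saddleCos_neg_left (C ν : ℝ) :
    saddleCos (-C) ν = ν / C * √((1 - C ^ 2) / (1 - ν ^ 2)) := by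
  rw [saddleCos, neg_sq, div_neg, neg_neg]

theorem abs_saddleCos_le_one {C ν : ℝ} (hC2 : C ^ 2 < 1) (hνC : ν ^ 2 ≤ C ^ 2) :
    |saddleCos C ν| ≤ 1 := by
  have hν : 0 < 1 - ν ^ 2 := by linarith
  rw [← sq_le_one_iff_abs_le_one, saddleCos, mul_pow, neg_sq, div_pow,
    Real.sq_sqrt (div_nonneg (by linarith) hν.le), div_mul_div_comm]
  rcases eq_or_ne C 0 with rfl | hC
  · simp
  · rw [div_le_one (by positivity)]
    nlinarith

theorem mem_Icc_and_cos_eq_iff {t : ℝ} (ht : |t| ≤ 1) (ξ : ℝ) :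
    ξ ∈ Icc (-π) π ∧ cos ξ = t ↔ ξ = arccos t ∨ ξ = -arccos t := by
  obtain ⟨ht₁, ht₂⟩ := abs_le.mp ht
  constructor
  · rintro ⟨⟨hξ₁, hξ₂⟩, rfl⟩
    rcases le_total 0 ξ with hξ | hξ
    · exact Or.inl (arccos_cos hξ hξ₂).symm
    · right
      rw [← cos_neg, arccos_cos (neg_nonneg.mpr hξ) (by linarith), neg_neg]
  · have := arccos_nonneg t
    have := arccos_le_pi t
    rintro (rfl | rfl)
    · exact ⟨⟨by linarith, by linarith⟩, cos_arccos ht₁ ht₂⟩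
    · exact ⟨⟨by linarith, by linarith⟩, by rw [cos_neg, cos_arccos ht₁ ht₂]⟩

section Derivatives

variable {C ν : ℝ}

theorem one_sub_sq_mul_sin_pos (hC2 : C ^ 2 < 1) (ξ : ℝ) : 0 < 1 - (C * sin ξ) ^ 2 := by
  nlinarith [sin_sq_le_one ξ, sq_nonneg C, mul_pow C (sin ξ) 2]

theorem hasDerivAt_greenPhase (hC2 : C ^ 2 < 1) (ξ : ℝ) :
    HasDerivAt (greenPhase C ν) (ν + C * cos ξ / √(1 - (C * sin ξ) ^ 2)) ξ := by
  have hu := one_sub_sq_mul_sin_pos hC2 ξ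
  have harcsin := (hasDerivAt_arcsin (by nlinarith) (by nlinarith)).comp ξ
    ((hasDerivAt_sin ξ).const_mul C)
  exact (((hasDerivAt_id ξ).const_mul ν).add harcsin).congr_deriv (by ring)

theorem deriv_greenPhase (hC2 : C ^ 2 < 1) :
    deriv (greenPhase C ν) = fun ξ => ν + C * cos ξ / √(1 - (C * sin ξ) ^ 2) :=
  funext fun ξ => (hasDerivAt_greenPhase hC2 ξ).deriv

theorem hasDerivAt_mul_cos_div_sqrt (hC2 : C ^ 2 < 1) (ξ : ℝ) :
    HasDerivAt (fun x => C * cos x / √(1 - (C * sin x) ^ 2))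
      (-(C * sin ξ) * (1 - C ^ 2) / √(1 - (C * sin ξ) ^ 2) ^ 3) ξ := by
  have hu := one_sub_sq_mul_sin_pos hC2 ξ
  have hnum : HasDerivAt (fun x => C * cos x) (-(C * sin ξ)) ξ := by
    simpa only [mul_neg] using (hasDerivAt_cos ξ).const_mul C
  have hrad : HasDerivAt (fun x => 1 - (C * sin x) ^ 2)
      (-(2 * (C * sin ξ) * (C * cos ξ))) ξ :=
    ((((hasDerivAt_sin ξ).const_mul C).pow 2).const_sub 1).congr_deriv (by ring)
  have hden : HasDerivAt (fun x => √(1 - (C * sin x) ^ 2))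
      (-(C * sin ξ) * (C * cos ξ) / √(1 - (C * sin ξ) ^ 2)) ξ :=
    ((hasDerivAt_sqrt hu.ne').comp ξ hrad).congr_deriv (by field_simp)
  have hs := Real.sqrt_pos.mpr hu
  refine (hnum.div hden hs.ne').congr_deriv ?_
  set s := √(1 - (C * sin ξ) ^ 2)
  have hs2 : s ^ 2 = 1 - (C * sin ξ) ^ 2 := Real.sq_sqrt hu.le
  field_simp
  linear_combination -(C * sin ξ) * hs2 + C ^ 3 * sin ξ * sin_sq_add_cos_sq ξ

theorem deriv_deriv_greenPhase (hC2 : C ^ 2 < 1) :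
    deriv (deriv (greenPhase C ν)) =
      fun ξ => -(C * sin ξ) * (1 - C ^ 2) / √(1 - (C * sin ξ) ^ 2) ^ 3 := by
  rw [deriv_greenPhase hC2]
  exact funext fun ξ => ((hasDerivAt_mul_cos_div_sqrt hC2 ξ).const_add ν).deriv

theorem deriv_greenPhase_eq_zero_iff_mul_cos (hC2 : C ^ 2 < 1) (ξ : ℝ) :
    deriv (greenPhase C ν) ξ = 0 ↔ C * cos ξ = -ν * √(1 - (C * sin ξ) ^ 2) := by
  have hs := Real.sqrt_pos.mpr (one_sub_sq_mul_sin_pos hC2 ξ)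
  rw [deriv_greenPhase hC2, ← mul_left_inj' hs.ne', zero_mul, add_mul, div_mul_cancel₀ _ hs.ne']
  constructor <;> intro h <;> linarith

theorem one_sub_sq_mul_sin_eq_of_mul_cos_eq (hC2 : C ^ 2 < 1) (hν2 : ν ^ 2 < 1) {ξ : ℝ}
    (h : C * cos ξ = -ν * √(1 - (C * sin ξ) ^ 2)) :
    1 - (C * sin ξ) ^ 2 = (1 - C ^ 2) / (1 - ν ^ 2) := by
  have hs2 := Real.sq_sqrt (one_sub_sq_mul_sin_pos hC2 ξ).le
  rw [eq_div_iff (by linarith)]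
  linear_combination congrArg (· ^ 2) h + ν ^ 2 * hs2 - C ^ 2 * sin_sq_add_cos_sq ξ

theorem deriv_greenPhase_eq_zero_iff (hC : C ≠ 0) (hC2 : C ^ 2 < 1) (hν2 : ν ^ 2 < 1)
    (ξ : ℝ) : deriv (greenPhase C ν) ξ = 0 ↔ cos ξ = saddleCos C ν := by
  have hk : 0 ≤ (1 - C ^ 2) / (1 - ν ^ 2) := div_nonneg (by linarith) (by linarith)
  have hcos : cos ξ = saddleCos C ν ↔ C * cos ξ = -ν * √((1 - C ^ 2) / (1 - ν ^ 2)) := by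
    rw [saddleCos, ← mul_right_inj' hC]
    constructor <;> intro h <;> rw [h] <;> field_simp
  rw [deriv_greenPhase_eq_zero_iff_mul_cos hC2, hcos]
  constructor
  · intro h
    rwa [one_sub_sq_mul_sin_eq_of_mul_cos_eq hC2 hν2 h] at h
  · intro h
    suffices 1 - (C * sin ξ) ^ 2 = (1 - C ^ 2) / (1 - ν ^ 2) by rwa [this]
    have hh := congrArg (· ^ 2) h
    simp only [mul_pow, neg_sq, Real.sq_sqrt hk] at hh
    rw [← mul_div_assoc, eq_div_iff (by linarith)] at hh
    rw [eq_div_iff (by linarith)]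
    linear_combination hh - C ^ 2 * (1 - ν ^ 2) * sin_sq_add_cos_sq ξ

theorem setOf_deriv_greenPhase_eq_zero (hC : C ≠ 0) (hC2 : C ^ 2 < 1) (hνC : ν ^ 2 ≤ C ^ 2) :
    {ξ ∈ Icc (-π) π | deriv (greenPhase C ν) ξ = 0} =
      {arccos (saddleCos C ν), -arccos (saddleCos C ν)} := by
  ext ξ
  rw [mem_ofPred_eq, deriv_greenPhase_eq_zero_iff hC hC2 (hνC.trans_lt hC2),
    mem_Icc_and_cos_eq_iff (abs_saddleCos_le_one hC2 hνC)]
  rfl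

theorem abs_deriv_deriv_greenPhase_of_deriv_eq_zero (hC2 : C ^ 2 < 1) (hν2 : ν ^ 2 < 1)
    {ξ : ℝ} (h : deriv (greenPhase C ν) ξ = 0) :
    |deriv (deriv (greenPhase C ν)) ξ| = (√(1 - C ^ 2))⁻¹ * (1 - ν ^ 2) * √(C ^ 2 - ν ^ 2) := by
  have hs := one_sub_sq_mul_sin_eq_of_mul_cos_eq hC2 hν2
    ((deriv_greenPhase_eq_zero_iff_mul_cos hC2 ξ).mp h)
  have hν2' : 0 < 1 - ν ^ 2 := by linarith
  have hC2' : 0 < 1 - C ^ 2 := by linarith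
  have hsin : (C * sin ξ) ^ 2 * (1 - ν ^ 2) = C ^ 2 - ν ^ 2 := by
    rw [eq_div_iff hν2'.ne'] at hs
    linarith
  have hCν : 0 ≤ C ^ 2 - ν ^ 2 := hsin ▸ by positivity
  have hs3 : (√(1 - (C * sin ξ) ^ 2) ^ 3) ^ 2 = ((1 - C ^ 2) / (1 - ν ^ 2)) ^ 3 := by
    rw [← pow_mul, pow_mul', Real.sq_sqrt (one_sub_sq_mul_sin_pos hC2 ξ).le, hs]
  rw [deriv_deriv_greenPhase hC2, ← pow_left_inj₀ (abs_nonneg _) (by positivity) two_ne_zero,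
    sq_abs, div_pow, hs3]
  simp only [mul_pow, inv_pow, neg_sq]
  rw [Real.sq_sqrt hC2'.le, Real.sq_sqrt hCν, ← hsin]
  field_simp

theorem deriv_deriv_greenPhase_eq_zero_iff (hC2 : C ^ 2 < 1) (hνC : ν ^ 2 ≤ C ^ 2) {ξ : ℝ}
    (h : deriv (greenPhase C ν) ξ = 0) :
    deriv (deriv (greenPhase C ν)) ξ = 0 ↔ ν ^ 2 = C ^ 2 := by
  have hν2 := hνC.trans_lt hC2
  rw [← abs_eq_zero, abs_deriv_deriv_greenPhase_of_deriv_eq_zero hC2 hν2 h,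
    mul_eq_zero_iff_left, Real.sqrt_eq_zero', sub_nonpos]
  · exact ⟨fun h' => le_antisymm hνC h', fun h' => h'.ge⟩
  · have : 0 < 1 - C ^ 2 := by linarith
    have : 0 < 1 - ν ^ 2 := by linarith
    positivity

end Derivatives

theorem saddle_points_of_green_phases_general (C ν : ℝ) (hC0 : 0 < |C|) (hC1 : |C| < 1)
    (hν1 : |ν| ≤ |C|) :
    let fp : ℝ → ℝ := fun ξ => ν * ξ + Real.arcsin (C * Real.sin ξ)
    let fm : ℝ → ℝ := fun ξ => ν * ξ - Real.arcsin (C * Real.sin ξ)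
    let a : ℝ := Real.arccos (-(ν / C) * Real.sqrt ((1 - C ^ 2) / (1 - ν ^ 2)))
    let b : ℝ := Real.arccos ((ν / C) * Real.sqrt ((1 - C ^ 2) / (1 - ν ^ 2)))
    ({ξ ∈ Set.Icc (-Real.pi) Real.pi | deriv fp ξ = 0} = {a, -a}) ∧
    ({ξ ∈ Set.Icc (-Real.pi) Real.pi | deriv fm ξ = 0} = {b, -b}) ∧
    (∀ ξ ∈ Set.Icc (-Real.pi) Real.pi, deriv fp ξ = 0 →
      |deriv (deriv fp) ξ| = (Real.sqrt (1 - C ^ 2))⁻¹ * (1 - ν ^ 2) * Real.sqrt (C ^ 2 - ν ^ 2)) ∧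
    (∀ ξ ∈ Set.Icc (-Real.pi) Real.pi, deriv fm ξ = 0 →
      |deriv (deriv fm) ξ| = (Real.sqrt (1 - C ^ 2))⁻¹ * (1 - ν ^ 2) * Real.sqrt (C ^ 2 - ν ^ 2)) ∧
    (|ν| < |C| → ∀ ξ ∈ Set.Icc (-Real.pi) Real.pi,
      (deriv fp ξ = 0 → deriv (deriv fp) ξ ≠ 0) ∧ (deriv fm ξ = 0 → deriv (deriv fm) ξ ≠ 0)) ∧
    (|ν| = |C| → ∀ ξ ∈ Set.Icc (-Real.pi) Real.pi,
      (deriv fp ξ = 0 → deriv (deriv fp) ξ = 0) ∧ (deriv fm ξ = 0 → deriv (deriv fm) ξ = 0)) := by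
  intro fp fm a b
  have hC : C ≠ 0 := abs_pos.mp hC0
  have hC2 : C ^ 2 < 1 := (sq_lt_one_iff_abs_lt_one C).mpr hC1
  have hνC : ν ^ 2 ≤ C ^ 2 := sq_le_sq.mpr hν1
  have hfm : fm = greenPhase (-C) ν := (greenPhase_neg_left C ν).symm
  have hb : b = arccos (saddleCos (-C) ν) := by rw [saddleCos_neg_left]
  rw [hfm, hb]
  have curvature {D : ℝ} (hD : D ^ 2 = C ^ 2) {ξ : ℝ} (h : deriv (greenPhase D ν) ξ = 0) :
      |deriv (deriv (greenPhase D ν)) ξ| =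
        (√(1 - C ^ 2))⁻¹ * (1 - ν ^ 2) * √(C ^ 2 - ν ^ 2) :=
    hD ▸ abs_deriv_deriv_greenPhase_of_deriv_eq_zero (hD ▸ hC2) (hνC.trans_lt hC2) h
  have degenerate {D : ℝ} (hD : D ^ 2 = C ^ 2) {ξ : ℝ} (h : deriv (greenPhase D ν) ξ = 0) :
      deriv (deriv (greenPhase D ν)) ξ = 0 ↔ ν ^ 2 = C ^ 2 :=
    hD ▸ deriv_deriv_greenPhase_eq_zero_iff (hD ▸ hC2) (hD ▸ hνC) h
  refine ⟨setOf_deriv_greenPhase_eq_zero hC hC2 hνC,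
    setOf_deriv_greenPhase_eq_zero (neg_ne_zero.mpr hC) (by rwa [neg_sq]) (by rwa [neg_sq]),
    fun ξ _ => curvature rfl, fun ξ _ => curvature (neg_sq C), fun hlt ξ _ => ?_,
    fun heq ξ _ => ?_⟩
  · have hne : ν ^ 2 ≠ C ^ 2 := (sq_lt_sq.mpr hlt).ne
    exact ⟨fun h => (degenerate rfl h).not.mpr hne,
      fun h => (degenerate (neg_sq C) h).not.mpr hne⟩
  · have hsq : ν ^ 2 = C ^ 2 := (sq_eq_sq_iff_abs_eq_abs ν C).mpr heq
    exact ⟨fun h => (degenerate rfl h).mpr hsq, fun h => (degenerate (neg_sq C) h).mpr hsq⟩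

/-- For `0 < |C| < 1` and `|ν| ≤ |C|`, `|ν| < 1`, the critical points of
`f_±(ξ) = νξ ± arcsin(C sin ξ)` in `[-π, π]` are exactly
`±arccos(∓(ν/C)·√((1-C²)/(1-ν²)))`, and at each such critical point the second
derivative satisfies `|f_±''| = (1-C²)^{-1/2}(1-ν²)√(C²-ν²)`; in particular the critical
points are non-degenerate if `|ν| < |C|` and degenerate if `|ν| = |C|`. -/
theorem saddle_points_of_green_phases (C ν : ℝ) (hC0 : 0 < |C|) (hC1 : |C| < 1)
    (hν0 : 0 ≤ |ν|) (hν1 : |ν| ≤ |C|) (hν2 : |ν| < 1) :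
    let fp : ℝ → ℝ := fun ξ => ν * ξ + Real.arcsin (C * Real.sin ξ)
    let fm : ℝ → ℝ := fun ξ => ν * ξ - Real.arcsin (C * Real.sin ξ)
    let a : ℝ := Real.arccos (-(ν / C) * Real.sqrt ((1 - C ^ 2) / (1 - ν ^ 2)))
    let b : ℝ := Real.arccos ((ν / C) * Real.sqrt ((1 - C ^ 2) / (1 - ν ^ 2)))
    ({ξ ∈ Set.Icc (-Real.pi) Real.pi | deriv fp ξ = 0} = {a, -a}) ∧
    ({ξ ∈ Set.Icc (-Real.pi) Real.pi | deriv fm ξ = 0} = {b, -b}) ∧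
    (∀ ξ ∈ Set.Icc (-Real.pi) Real.pi, deriv fp ξ = 0 →
      |deriv (deriv fp) ξ| = (Real.sqrt (1 - C ^ 2))⁻¹ * (1 - ν ^ 2) * Real.sqrt (C ^ 2 - ν ^ 2)) ∧
    (∀ ξ ∈ Set.Icc (-Real.pi) Real.pi, deriv fm ξ = 0 →
      |deriv (deriv fm) ξ| = (Real.sqrt (1 - C ^ 2))⁻¹ * (1 - ν ^ 2) * Real.sqrt (C ^ 2 - ν ^ 2)) ∧
    (|ν| < |C| → ∀ ξ ∈ Set.Icc (-Real.pi) Real.pi,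
      (deriv fp ξ = 0 → deriv (deriv fp) ξ ≠ 0) ∧ (deriv fm ξ = 0 → deriv (deriv fm) ξ ≠ 0)) ∧
    (|ν| = |C| → ∀ ξ ∈ Set.Icc (-Real.pi) Real.pi,
      (deriv fp ξ = 0 → deriv (deriv fp) ξ = 0) ∧ (deriv fm ξ = 0 → deriv (deriv fm) ξ = 0)) :=
  saddle_points_of_green_phases_general C ν hC0 hC1 hν1
end
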